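/- Let γ ∈ (-2, -1], b(v) = -2|v|^γ v (with b(0)=0), and φ_η(x) = (3/(4πη³)) 1_{|x|<η}. Then there is a constant C > 0 (depending only on γ) such that for all η ∈ (0,1) and all v ∈ ℝ³ \ {0}, |(b ⋆ φ_η)(v) − b(v)| ≤ C min{η, |v|} |v|^γ. -/

import Mathlib

/-! Write `(b ⋆ φ_η)(v) - b(v) = ∫ φ_η(x) (b(v - x) - b(v)) dx`. If `|v| ≥ 2η`, every `v - x` in
the support has `|v - x| ≥ |v| / 2`, and the Lipschitz-type bound
`|b(y) - b(z)| ≤ 2(1 - γ) |y - z| (|y|^γ + |z|^γ)`, which comes from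
`1 - s^γ ≤ -γ log s ≤ -γ (s - 1)`, gives `O(η |v|^γ)`. If `|v| < 2η`, the two terms are bounded
separately: `|(b ⋆ φ_η)(v)| ≤ ‖φ_η‖_∞ ∫_{|y| < 3η} 2 |y|^(γ+1) dy = O(η^(γ+1))`, which is
`O(|v|^(γ+1))` because `γ + 1 ≤ 0`, and `|b(v)| = 2 |v|^(γ+1)`. -/

open MeasureTheory

noncomputable section

/-- The Landau drift kernel `b(v) = -2 |v|^γ v` (with `b(0) = 0` since `γ < 0`). -/
def bKer (γ : ℝ) (v : EuclideanSpace ℝ (Fin 3)) : EuclideanSpace ℝ (Fin 3) :=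
  (-2 * ‖v‖ ^ γ) • v

/-- The uniform mollifier `φ_η(x) = (3/(4πη³)) 1_{|x|<η}`. -/
def phiMol (η : ℝ) (x : EuclideanSpace ℝ (Fin 3)) : ℝ :=
  if ‖x‖ < η then 3 / (4 * Real.pi * η ^ 3) else 0

/-- The convolution `(b ⋆ φ_η)(v)`. -/
def bConv (γ η : ℝ) (v : EuclideanSpace ℝ (Fin 3)) : EuclideanSpace ℝ (Fin 3) :=
  ∫ x, phiMol η x • bKer γ (v - x)

open Real Metric Set Module
open scoped Convolution

theorem one_sub_rpow_le {s γ : ℝ} (hs : 0 < s) (hγ : γ ≤ 0) : 1 - s ^ γ ≤ -γ * (s - 1) := by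
  have hexp : log s * γ + 1 ≤ s ^ γ := by
    rw [rpow_def_of_pos hs]
    exact add_one_le_exp _
  nlinarith [log_le_sub_one_of_pos hs]

theorem abs_rpow_sub_rpow_mul_le {a b γ : ℝ} (hγ : γ ≤ 0) (ha : 0 ≤ a) (hab : a ≤ b) :
    |a ^ γ - b ^ γ| * a ≤ -γ * a ^ γ * (b - a) := by
  rcases ha.eq_or_lt with rfl | ha
  · rw [mul_zero]
    exact mul_nonneg (mul_nonneg (neg_nonneg.2 hγ) (rpow_nonneg le_rfl _)) (by linarith)
  have hb : 0 < b := ha.trans_le hab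
  have hpow : b ^ γ = a ^ γ * (b / a) ^ γ := by
    rw [div_rpow hb.le ha.le]
    field_simp [(rpow_pos_of_pos ha γ).ne']
  rw [abs_of_nonneg (sub_nonneg.2 (rpow_le_rpow_of_nonpos ha hab hγ))]
  calc (a ^ γ - b ^ γ) * a = a ^ γ * a * (1 - (b / a) ^ γ) := by rw [hpow]; ring
    _ ≤ a ^ γ * a * (-γ * (b / a - 1)) := by
        gcongr
        exact one_sub_rpow_le (div_pos hb ha) hγ
    _ = -γ * a ^ γ * (b - a) := by field_simp

section RadialPower

variable {E : Type*} [NormedAddCommGroup E] [NormedSpace ℝ E] [FiniteDimensional ℝ E]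
  [MeasurableSpace E] [BorelSpace E] [Nontrivial E] (μ : Measure E) [μ.IsAddHaarMeasure]

theorem integrableOn_ball_norm_rpow {p : ℝ} (hp : -(finrank ℝ E : ℝ) < p) (R : ℝ) :
    IntegrableOn (fun x : E ↦ ‖x‖ ^ p) (ball 0 R) μ :=
  integrableOn_ball_of_norm_le_rpow finrank_pos (C := 1) (α := -p) (by linarith)
    (ae_of_all _ fun x ↦ by simp [abs_of_nonneg (rpow_nonneg (norm_nonneg x) p)])
    (measurable_norm.pow_const p).aestronglyMeasurable

theorem setIntegral_ball_norm_rpow {p R : ℝ} (hp : -(finrank ℝ E : ℝ) < p) (hR : 0 ≤ R) :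
    ∫ x in ball (0 : E) R, ‖x‖ ^ p ∂μ =
      finrank ℝ E * μ.real (ball 0 1) * (R ^ (p + finrank ℝ E) / (p + finrank ℝ E)) := by
  have hradial : ∫ x in ball (0 : E) R, ‖x‖ ^ p ∂μ =
      ∫ x, (Iio R).indicator (fun r ↦ r ^ p) ‖x‖ ∂μ := by
    rw [← integral_indicator measurableSet_ball]
    congr 1 with x
    simp [indicator]
  have hpolar : EqOn (fun r ↦ r ^ (finrank ℝ E - 1) • (Iio R).indicator (fun r ↦ r ^ p) r)
      ((Iio R).indicator fun r ↦ r ^ (p + finrank ℝ E - 1)) (Ioi 0) := by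
    intro r (hr : 0 < r)
    by_cases hrR : r < R
    · simp only [indicator_of_mem (show r ∈ Iio R from hrR), smul_eq_mul]
      rw [← rpow_natCast, ← rpow_add hr, Nat.cast_sub finrank_pos]
      ring_nf
    · simp [indicator_of_notMem (show r ∉ Iio R from hrR)]
  rw [hradial, integral_fun_norm_addHaar, setIntegral_congr_fun measurableSet_Ioi hpolar,
    setIntegral_indicator measurableSet_Iio, Ioi_inter_Iio, ← integral_Ioc_eq_integral_Ioo,
    ← intervalIntegral.integral_of_le hR, integral_rpow (Or.inl (by linarith)),
    sub_add_cancel, zero_rpow (by linarith), nsmul_eq_mul, smul_eq_mul]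
  ring

end RadialPower

local notation "ℝ³" => EuclideanSpace ℝ (Fin 3)

theorem phiMol_eq_indicator (η : ℝ) :
    phiMol η = (ball (0 : ℝ³) η).indicator fun _ ↦ 3 / (4 * π * η ^ 3) := by
  ext x
  simp [phiMol, indicator]

theorem phiMol_nonneg (η : ℝ) (x : ℝ³) : 0 ≤ phiMol η x := by
  unfold phiMol
  split_ifs with hx
  · have : 0 < η := (norm_nonneg x).trans_lt hx
    positivity
  · exact le_rfl

theorem phiMol_le {η : ℝ} (hη : 0 < η) (x : ℝ³) : phiMol η x ≤ 3 / (4 * π * η ^ 3) := by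
  unfold phiMol
  split_ifs
  · exact le_rfl
  · positivity

theorem support_phiMol_subset (η : ℝ) : Function.support (phiMol η) ⊆ ball 0 η := by
  rw [phiMol_eq_indicator]
  exact support_indicator_subset

theorem integral_phiMol {η : ℝ} (hη : 0 < η) : ∫ x, phiMol η x = 1 := by
  rw [phiMol_eq_indicator, integral_indicator_const _ measurableSet_ball, measureReal_def,
    EuclideanSpace.volume_ball_fin_three, ENNReal.toReal_mul, ENNReal.toReal_pow,
    ENNReal.toReal_ofReal hη.le, ENNReal.toReal_ofReal (by positivity), smul_eq_mul]
  field_simp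

theorem bConv_eq_convolution (γ η : ℝ) : bConv γ η = phiMol η ⋆ bKer γ := rfl

theorem measurable_bKer (γ : ℝ) : Measurable (bKer γ) := by
  unfold bKer
  fun_prop

theorem norm_bKer_le (γ : ℝ) (v : ℝ³) : ‖bKer γ v‖ ≤ 2 * ‖v‖ ^ (γ + 1) := by
  rcases eq_or_ne v 0 with rfl | hv
  · simp only [bKer, smul_zero, norm_zero]
    positivity
  · rw [bKer, norm_smul, rpow_add_one (norm_ne_zero_iff.2 hv), norm_mul, norm_neg,
      Real.norm_two, Real.norm_of_nonneg (rpow_nonneg (norm_nonneg v) γ), mul_assoc]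

theorem norm_bKer_sub_le {γ : ℝ} (hγ : γ ≤ 0) (y z : ℝ³) :
    ‖bKer γ y - bKer γ z‖ ≤ 2 * (1 - γ) * ‖y - z‖ * (‖y‖ ^ γ + ‖z‖ ^ γ) := by
  wlog h : ‖z‖ ≤ ‖y‖ generalizing y z
  · have := this z y (le_of_not_ge h)
    rwa [norm_sub_rev, norm_sub_rev z, add_comm (‖z‖ ^ γ)] at this
  have hsplit : bKer γ y - bKer γ z =
      (-2 * ‖y‖ ^ γ) • (y - z) + (2 * (‖z‖ ^ γ - ‖y‖ ^ γ)) • z := by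
    simp only [bKer]
    module
  have hy := rpow_nonneg (norm_nonneg y) γ
  have hz := rpow_nonneg (norm_nonneg z) γ
  have hyz : ‖y‖ - ‖z‖ ≤ ‖y - z‖ := norm_sub_norm_le y z
  have hkey := abs_rpow_sub_rpow_mul_le hγ (norm_nonneg z) h
  calc ‖bKer γ y - bKer γ z‖
      ≤ 2 * ‖y‖ ^ γ * ‖y - z‖ + 2 * (|‖z‖ ^ γ - ‖y‖ ^ γ| * ‖z‖) := by
        rw [hsplit]
        refine (norm_add_le _ _).trans_eq ?_
        simp only [norm_smul, norm_mul, Real.norm_eq_abs, abs_neg, abs_two, abs_of_nonneg hy]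
        ring
    _ ≤ 2 * ‖y‖ ^ γ * ‖y - z‖ + 2 * (-γ * ‖z‖ ^ γ * ‖y - z‖) := by
        have hγz : 0 ≤ -γ * ‖z‖ ^ γ := mul_nonneg (neg_nonneg.2 hγ) hz
        linarith [hkey.trans (mul_le_mul_of_nonneg_left hyz hγz)]
    _ ≤ 2 * (1 - γ) * ‖y - z‖ * (‖y‖ ^ γ + ‖z‖ ^ γ) := by
        nlinarith [norm_nonneg (y - z), mul_nonneg hy (norm_nonneg (y - z)),
          mul_nonneg hz (norm_nonneg (y - z))]

theorem norm_bConv_sub_bKer_le_of_two_mul_le {γ η : ℝ} (hγ : γ ≤ 0) (hη : 0 < η) {v : ℝ³}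
    (hv : 2 * η ≤ ‖v‖) :
    ‖bConv γ η v - bKer γ v‖ ≤ 2 * (1 - γ) * (2 ^ (-γ) + 1) * η * ‖v‖ ^ γ := by
  have hvγ := rpow_nonneg (norm_nonneg v) γ
  have hε : 0 ≤ 2 * (1 - γ) * (2 ^ (-γ) + 1) * η * ‖v‖ ^ γ :=
    mul_nonneg (mul_nonneg (mul_nonneg (by linarith) (by positivity)) hη.le) hvγ
  rw [← dist_eq_norm, bConv_eq_convolution]
  refine dist_convolution_le hε (support_phiMol_subset η) (phiMol_nonneg η) (integral_phiMol hη)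
    (measurable_bKer γ).aestronglyMeasurable fun x hx ↦ ?_
  rw [mem_ball, dist_eq_norm] at hx
  have hxv : ‖v‖ / 2 ≤ ‖x‖ := by
    linarith [norm_sub_norm_le v x, norm_sub_rev v x]
  have hxγ : ‖x‖ ^ γ ≤ 2 ^ (-γ) * ‖v‖ ^ γ :=
    calc ‖x‖ ^ γ ≤ (‖v‖ / 2) ^ γ := rpow_le_rpow_of_nonpos (by linarith) hxv hγ
      _ = 2 ^ (-γ) * ‖v‖ ^ γ := by
        rw [div_rpow (norm_nonneg v) zero_le_two, rpow_neg zero_le_two, div_eq_mul_inv, mul_comm]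
  rw [dist_eq_norm]
  calc ‖bKer γ x - bKer γ v‖ ≤ 2 * (1 - γ) * ‖x - v‖ * (‖x‖ ^ γ + ‖v‖ ^ γ) :=
        norm_bKer_sub_le hγ x v
    _ ≤ 2 * (1 - γ) * η * (2 ^ (-γ) * ‖v‖ ^ γ + ‖v‖ ^ γ) := by
        have : 0 ≤ 1 - γ := by linarith
        gcongr
    _ = 2 * (1 - γ) * (2 ^ (-γ) + 1) * η * ‖v‖ ^ γ := by ring

theorem norm_bConv_le {γ η : ℝ} (hγ : -4 < γ) (hη : 0 < η) {v : ℝ³} (hv : ‖v‖ ≤ 2 * η) :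
    ‖bConv γ η v‖ ≤ 6 * 3 ^ (γ + 4) / (γ + 4) * η ^ (γ + 1) := by
  have hp : -(finrank ℝ ℝ³ : ℝ) < γ + 1 := by
    simp only [finrank_euclideanSpace, Fintype.card_fin, Nat.cast_ofNat]
    linarith
  have hdom : ∀ t, ‖phiMol η (v - t) • bKer γ t‖ ≤ (ball (0 : ℝ³) (3 * η)).indicator
      (fun y ↦ 3 / (4 * π * η ^ 3) * (2 * ‖y‖ ^ (γ + 1))) t := by
    intro t
    by_cases ht : ‖v - t‖ < η
    · have htR : t ∈ ball (0 : ℝ³) (3 * η) := by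
        rw [mem_ball_zero_iff]
        linarith [norm_sub_norm_le t v, norm_sub_rev t v]
      rw [indicator_of_mem htR, norm_smul, Real.norm_of_nonneg (phiMol_nonneg η _)]
      exact mul_le_mul (phiMol_le hη _) (norm_bKer_le γ t) (norm_nonneg _) (by positivity)
    · rw [phiMol, if_neg ht, zero_smul, norm_zero]
      exact indicator_nonneg (fun y _ ↦ by positivity) t
  have hint : Integrable ((ball (0 : ℝ³) (3 * η)).indicator
      fun y ↦ 3 / (4 * π * η ^ 3) * (2 * ‖y‖ ^ (γ + 1))) :=
    (integrable_indicator_iff measurableSet_ball).2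
      (((integrableOn_ball_norm_rpow volume hp _).const_mul 2).const_mul _)
  have hpow : (3 * η) ^ (γ + 1 + 3) = 3 ^ (γ + 4) * η ^ (γ + 1) * η ^ 3 := by
    rw [mul_rpow zero_le_three hη.le, rpow_add hη, show γ + 1 + 3 = γ + 4 by ring]
    norm_cast
    ring
  rw [bConv_eq_convolution, convolution_lsmul_swap]
  calc ‖∫ t, phiMol η (v - t) • bKer γ t‖
      ≤ ∫ t, (ball (0 : ℝ³) (3 * η)).indicator
          (fun y ↦ 3 / (4 * π * η ^ 3) * (2 * ‖y‖ ^ (γ + 1))) t :=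
        norm_integral_le_of_norm_le hint (ae_of_all _ hdom)
    _ = 3 / (4 * π * η ^ 3) * (2 * ∫ y in ball (0 : ℝ³) (3 * η), ‖y‖ ^ (γ + 1)) := by
        rw [integral_indicator measurableSet_ball, integral_const_mul, integral_const_mul]
    _ = 6 * 3 ^ (γ + 4) / (γ + 4) * η ^ (γ + 1) := by
        rw [setIntegral_ball_norm_rpow volume hp (by positivity)]
        simp only [finrank_euclideanSpace, Fintype.card_fin, measureReal_def,
          EuclideanSpace.volume_ball_fin_three]
        push_cast
        rw [hpow, ENNReal.toReal_mul, ENNReal.toReal_pow, ENNReal.toReal_ofReal zero_le_one,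
          ENNReal.toReal_ofReal (by positivity)]
        field_simp
        ring

theorem norm_bConv_sub_bKer_le_of_le_two_mul {γ η : ℝ} (hγ₁ : -4 < γ) (hγ₂ : γ ≤ -1)
    (hη : 0 < η) {v : ℝ³} (hv₀ : v ≠ 0) (hv : ‖v‖ ≤ 2 * η) :
    ‖bConv γ η v - bKer γ v‖ ≤
      (6 * 3 ^ (γ + 4) / (γ + 4) * 2 ^ (-(γ + 1)) + 2) * ‖v‖ ^ (γ + 1) := by
  have hnorm : 0 < ‖v‖ := norm_pos_iff.2 hv₀
  have hcoef : 0 ≤ 6 * 3 ^ (γ + 4) / (γ + 4) :=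
    div_nonneg (by positivity) (by linarith)
  have hηpow : η ^ (γ + 1) ≤ 2 ^ (-(γ + 1)) * ‖v‖ ^ (γ + 1) :=
    calc η ^ (γ + 1) ≤ (‖v‖ / 2) ^ (γ + 1) :=
          rpow_le_rpow_of_nonpos (by positivity) (by linarith) (by linarith)
      _ = 2 ^ (-(γ + 1)) * ‖v‖ ^ (γ + 1) := by
        rw [div_rpow hnorm.le zero_le_two, rpow_neg zero_le_two, div_eq_mul_inv, mul_comm]
  calc ‖bConv γ η v - bKer γ v‖ ≤ ‖bConv γ η v‖ + ‖bKer γ v‖ := norm_sub_le _ _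
    _ ≤ 6 * 3 ^ (γ + 4) / (γ + 4) * η ^ (γ + 1) + 2 * ‖v‖ ^ (γ + 1) :=
        add_le_add (norm_bConv_le hγ₁ hη hv) (norm_bKer_le γ v)
    _ ≤ 6 * 3 ^ (γ + 4) / (γ + 4) * (2 ^ (-(γ + 1)) * ‖v‖ ^ (γ + 1)) + 2 * ‖v‖ ^ (γ + 1) := by
        gcongr
    _ = (6 * 3 ^ (γ + 4) / (γ + 4) * 2 ^ (-(γ + 1)) + 2) * ‖v‖ ^ (γ + 1) := by ring

/-- for `γ ∈ (-2,-1]` there is `C > 0` (depending only on `γ`) such that for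
all `η ∈ (0,1)` and all `v ∈ ℝ³ \ {0}`,
`|(b ⋆ φ_η)(v) − b(v)| ≤ C min{η, |v|} |v|^γ`. -/
theorem statement5 (γ : ℝ) (hγ : γ ∈ Set.Ioc (-2 : ℝ) (-1)) :
    ∃ C : ℝ, 0 < C ∧ ∀ η ∈ Set.Ioo (0 : ℝ) 1, ∀ v : EuclideanSpace ℝ (Fin 3), v ≠ 0 →
      ‖bConv γ η v - bKer γ v‖ ≤ C * min η ‖v‖ * ‖v‖ ^ γ := by
  obtain ⟨hγ₁, hγ₂⟩ := hγ
  set C₁ := 2 * (1 - γ) * (2 ^ (-γ) + 1)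
  set C₂ := 6 * 3 ^ (γ + 4) / (γ + 4) * 2 ^ (-(γ + 1)) + 2
  have hC₁ : 0 < C₁ := mul_pos (by linarith) (by positivity)
  have hC₂ : 0 < C₂ := add_pos_of_nonneg_of_pos
    (mul_nonneg (div_nonneg (by positivity) (by linarith)) (by positivity)) two_pos
  refine ⟨C₁ + 2 * C₂, by positivity, fun η ⟨hη, _⟩ v hv ↦ ?_⟩
  have hnorm : 0 < ‖v‖ := norm_pos_iff.2 hv
  have hvγ : 0 ≤ min η ‖v‖ * ‖v‖ ^ γ := by positivity
  rcases le_or_gt (2 * η) ‖v‖ with hlarge | hsmall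
  · have hmin : min η ‖v‖ = η := min_eq_left (by linarith)
    calc ‖bConv γ η v - bKer γ v‖ ≤ C₁ * η * ‖v‖ ^ γ :=
          norm_bConv_sub_bKer_le_of_two_mul_le (by linarith) hη hlarge
      _ ≤ (C₁ + 2 * C₂) * min η ‖v‖ * ‖v‖ ^ γ := by
          rw [hmin] at hvγ ⊢
          nlinarith [mul_nonneg hC₂.le hvγ]
  · have hmin : ‖v‖ ≤ 2 * min η ‖v‖ := by
      rcases min_choice η ‖v‖ with h | h <;> rw [h] <;> linarith
    calc ‖bConv γ η v - bKer γ v‖ ≤ C₂ * ‖v‖ ^ (γ + 1) :=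
          norm_bConv_sub_bKer_le_of_le_two_mul (by linarith) hγ₂ hη hv hsmall.le
      _ = C₂ * ‖v‖ * ‖v‖ ^ γ := by rw [rpow_add_one hnorm.ne']; ring
      _ ≤ (C₁ + 2 * C₂) * min η ‖v‖ * ‖v‖ ^ γ := by
          nlinarith [mul_le_mul_of_nonneg_right hmin (rpow_nonneg hnorm.le γ),
            mul_nonneg hC₁.le hvγ]
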